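/- Consider the 3×2 centipede game with payoff matrices X^{(1)} = [[1,1],[0,3],[0,2]] and X^{(2)} = [[0,0],[2,1],[2,4]]. (1) There exists a 3×2 matrix P = (p_{kl}) with all entries positive and summing to 1 such that all 2×2 minors of M_1(P) vanish and det M_2(P) = 0 (i.e., the game has dependency equilibria). (2) There is no such P that in addition has rank one (i.e., p_{11}p_{22}−p_{12}p_{21} = p_{11}p_{32}−p_{12}p_{31} = p_{21}p_{32}−p_{22}p_{31} = 0); the game has no totally mixed Nash equilibria. -/
import Mathlib


/-- The `3 × 2` centipede game with payoff matrices
`X⁽¹⁾ = [[1,1],[0,3],[0,2]]` and `X⁽²⁾ = [[0,0],[2,1],[2,4]]` has dependency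
equilibria, but no totally mixed Nash equilibria. -/
theorem centipede_dependency_but_no_nash :
    (∃ p11 p12 p21 p22 p31 p32 : ℝ,
      (0 < p11 ∧ 0 < p12 ∧ 0 < p21 ∧ 0 < p22 ∧ 0 < p31 ∧ 0 < p32) ∧
      p11 + p12 + p21 + p22 + p31 + p32 = 1 ∧
      (p11 + p12) * (3 * p22) - (p11 + p12) * (p21 + p22) = 0 ∧
      (p11 + p12) * (2 * p32) - (p11 + p12) * (p31 + p32) = 0 ∧
      (p21 + p22) * (2 * p32) - (3 * p22) * (p31 + p32) = 0 ∧
      (p11 + p21 + p31) * (p22 + 4 * p32)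
        - (2 * p21 + 2 * p31) * (p12 + p22 + p32) = 0) ∧
    ¬ (∃ p11 p12 p21 p22 p31 p32 : ℝ,
      (0 < p11 ∧ 0 < p12 ∧ 0 < p21 ∧ 0 < p22 ∧ 0 < p31 ∧ 0 < p32) ∧
      p11 + p12 + p21 + p22 + p31 + p32 = 1 ∧
      (p11 + p12) * (3 * p22) - (p11 + p12) * (p21 + p22) = 0 ∧
      (p11 + p12) * (2 * p32) - (p11 + p12) * (p31 + p32) = 0 ∧
      (p21 + p22) * (2 * p32) - (3 * p22) * (p31 + p32) = 0 ∧
      (p11 + p21 + p31) * (p22 + 4 * p32)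
        - (2 * p21 + 2 * p31) * (p12 + p22 + p32) = 0 ∧
      p11 * p22 - p12 * p21 = 0 ∧
      p11 * p32 - p12 * p31 = 0 ∧
      p21 * p32 - p22 * p31 = 0) := by
  constructor
  · exact ⟨27/110, 28/110, 22/110, 11/110, 11/110, 11/110, by norm_num, by norm_num,
      by norm_num, by norm_num, by norm_num, by norm_num⟩
  · rintro ⟨p11, p12, p21, p22, p31, p32, ⟨h11, h12, h21, h22, h31, h32⟩, hsum,
      e1, e2, e3, e4, r1, r2, r3⟩
    have hpos : 0 < p11 + p12 := by linarith
    have h1 : p21 = 2 * p22 := by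
      have := mul_left_cancel₀ (ne_of_gt hpos) (a := p11 + p12)
        (b := 3 * p22) (c := p21 + p22) (by linarith)
      linarith
    have h2 : p31 = p32 := by
      have := mul_left_cancel₀ (ne_of_gt hpos) (a := p11 + p12)
        (b := 2 * p32) (c := p31 + p32) (by linarith)
      linarith
    have : p21 * p32 - p22 * p31 = p22 * p32 := by rw [h1, h2]; ring
    nlinarith [mul_pos h22 h32]
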